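/- Let H ∈ {0,1}^{m×n} and γ ∈ ℝ^n with γ_i ≠ 0 for all i. Let C be a finite set of pairs (j,V) where j is a row index of H and V ⊆ N(j) has odd cardinality, and suppose u* is the unique minimizer of γᵀu over the set of u satisfying the initial box constraints determined by γ together with the parity inequality associated with (j,V) for every (j,V) ∈ C. Let J = {j : some (j,V) ∈ C is active at u*}, and let H_J be the submatrix of H consisting of the rows in J. Then u* is the unique minimizer of γᵀu over the fundamental polytope P(H_J). -/

import Mathlib

/-- Support of row `j` of a binary matrix `H`. -/
def supp {m n : ℕ} (H : Fin m → Fin n → Bool) (j : Fin m) : Finset (Fin n) :=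
  Finset.univ.filter (fun i => H j i)

/-- Left-hand side of the parity inequality associated with `(j, V)` at `u`. -/
def LHS {m n : ℕ} (H : Fin m → Fin n → Bool) (j : Fin m) (V : Finset (Fin n))
    (u : Fin n → ℝ) : ℝ :=
  ∑ i ∈ V, (1 - u i) + ∑ i ∈ supp H j \ V, u i

/-- The feasible set of an (M)ALP subproblem: initial box constraints
determined by `γ`, together with the parity inequalities of the pairs in `C`. -/
def feasible {m n : ℕ} (H : Fin m → Fin n → Bool) (γ : Fin n → ℝ)
    (C : Finset (Fin m × Finset (Fin n))) : Set (Fin n → ℝ) :=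
  {u | (∀ i, (0 ≤ γ i → 0 ≤ u i) ∧ (γ i < 0 → u i ≤ 1)) ∧
    ∀ p ∈ C, 1 ≤ LHS H p.1 p.2 u}

/-- The fundamental polytope of the submatrix of `H` given by the rows in `J`:
all `u ∈ [0,1]^n` satisfying every parity inequality of every row in `J`. -/
def fundamentalPolytopeRows {m n : ℕ} (H : Fin m → Fin n → Bool)
    (J : Set (Fin m)) : Set (Fin n → ℝ) :=
  {u | (∀ i, 0 ≤ u i ∧ u i ≤ 1) ∧
    ∀ j ∈ J, ∀ V : Finset (Fin n), V ⊆ supp H j → Odd V.card → 1 ≤ LHS H j V u}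

/-!
Clamping a feasible point of the subproblem into `[0,1]^n` keeps it feasible and, because the box
constraints point against the sign of `γ`, does not increase `γᵀu`; so the unique minimizer `u*`
lies in the unit cube. For two distinct odd subsets `V, W ⊆ N(j)` the two left-hand sides add up
to `1` on each element of `V ∆ W`, a set of even nonzero size, so they sum to at least `2` on the
cube: an inequality of row `j` tight at `u*` forces all others of that row, and `u* ∈ P(H_J)`. For
`v ∈ P(H_J)` the point `(1 - ε) u* + ε v` is feasible for the subproblem for small `ε > 0` (tight
inequalities hold at `v`, slack ones stay slack by continuity), and uniqueness of `u*` gives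
`γᵀu* < γᵀv`.
-/

open Finset Filter Topology
open scoped symmDiff

lemma Finset.card_symmDiff_add_two_mul_card_inter {α : Type*} [DecidableEq α] (s t : Finset α) :
    #(s ∆ t) + 2 * #(s ∩ t) = #s + #t := by
  rw [symmDiff_eq_sup_sdiff_inf, sup_eq_union, inf_eq_inter,
    card_sdiff_of_subset inter_subset_union, ← card_union_add_card_inter s t]
  have := card_le_card (inter_subset_union (s := s) (t := t))
  omega

lemma Finset.two_le_card_symmDiff_of_odd {α : Type*} [DecidableEq α] {s t : Finset α}
    (hs : Odd #s) (ht : Odd #t) (hne : s ≠ t) : 2 ≤ #(s ∆ t) := by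
  have hpos : #(s ∆ t) ≠ 0 := by simpa [symmDiff_eq_empty] using hne
  have := card_symmDiff_add_two_mul_card_inter s t
  obtain ⟨a, ha⟩ := hs
  obtain ⟨b, hb⟩ := ht
  omega

lemma min_one_sum_le_sum_clamp {ι : Type*} (s : Finset ι) (f : ι → ℝ) :
    min 1 (∑ i ∈ s, f i) ≤ ∑ i ∈ s, max 0 (min 1 (f i)) := by
  by_cases h : ∃ i ∈ s, 1 ≤ f i
  · obtain ⟨i, hi, h1⟩ := h
    calc min 1 (∑ i ∈ s, f i) ≤ 1 := min_le_left _ _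
      _ = max 0 (min 1 (f i)) := by rw [min_eq_left h1, max_eq_right zero_le_one]
      _ ≤ ∑ i ∈ s, max 0 (min 1 (f i)) :=
        single_le_sum (f := fun i => max 0 (min 1 (f i))) (fun _ _ => le_max_left _ _) hi
  · push Not at h
    refine (min_le_right _ _).trans (sum_le_sum fun i hi => ?_)
    rw [min_eq_right (h i hi).le]
    exact le_max_right _ _

lemma one_sub_clamp (x : ℝ) : 1 - max 0 (min 1 x) = max 0 (min 1 (1 - x)) := by
  simp only [max_def, min_def]
  split_ifs <;> linarith

lemma mul_clamp_le {c x : ℝ} (h0 : 0 ≤ c → 0 ≤ x) (h1 : c < 0 → x ≤ 1) :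
    c * max 0 (min 1 x) ≤ c * x := by
  rcases le_or_gt 0 c with hc | hc
  · exact mul_le_mul_of_nonneg_left (max_le (h0 hc) (min_le_right _ _)) hc
  · refine mul_le_mul_of_nonpos_left ?_ hc.le
    rw [min_eq_right (h1 hc)]
    exact le_max_right _ _

lemma eventually_one_le_convexComb {a b : ℝ} (ha : 1 ≤ a) (hb : a = 1 → 1 ≤ b) :
    ∀ᶠ ε in 𝓝[>] (0 : ℝ), 1 ≤ (1 - ε) * a + ε * b := by
  rcases ha.eq_or_lt with rfl | ha
  · filter_upwards [self_mem_nhdsWithin] with ε (hε : 0 < ε)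
    nlinarith [hb rfl]
  · have hcont : Continuous fun ε : ℝ => (1 - ε) * a + ε * b := by fun_prop
    have hlim : Tendsto (fun ε : ℝ => (1 - ε) * a + ε * b) (𝓝[>] 0) (𝓝 a) := by
      simpa using (hcont.tendsto 0).mono_left nhdsWithin_le_nhds
    exact (hlim.eventually (lt_mem_nhds ha)).mono fun _ h => h.le

section ParityInequalities

variable {m n : ℕ} (H : Fin m → Fin n → Bool)

lemma LHS_eq_sum_ite {j : Fin m} {V : Finset (Fin n)} (hV : V ⊆ supp H j) (u : Fin n → ℝ) :
    LHS H j V u = ∑ i ∈ supp H j, if i ∈ V then 1 - u i else u i := by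
  rw [LHS, ← sum_sdiff hV, add_comm]
  congr 1
  · exact sum_congr rfl fun i hi => (if_neg (mem_sdiff.mp hi).2).symm
  · exact sum_congr rfl fun i hi => (if_pos hi).symm

variable {H}

lemma LHS_nonneg (j : Fin m) (V : Finset (Fin n)) {u : Fin n → ℝ}
    (hu : ∀ i, 0 ≤ u i ∧ u i ≤ 1) : 0 ≤ LHS H j V u :=
  add_nonneg (sum_nonneg fun i _ => sub_nonneg.mpr (hu i).2) (sum_nonneg fun i _ => (hu i).1)

lemma LHS_convexComb (j : Fin m) (V : Finset (Fin n)) (u v : Fin n → ℝ) {a b : ℝ}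
    (hab : a + b = 1) :
    LHS H j V (fun i => a * u i + b * v i) = a * LHS H j V u + b * LHS H j V v := by
  have hV : ∑ i ∈ V, (1 - (a * u i + b * v i)) = ∑ i ∈ V, (a * (1 - u i) + b * (1 - v i)) :=
    sum_congr rfl fun i _ => by linear_combination -hab
  simp only [LHS, hV, sum_add_distrib, ← mul_sum]
  ring

lemma two_le_LHS_add_LHS {j : Fin m} {V W : Finset (Fin n)} {u : Fin n → ℝ}
    (hu : ∀ i, 0 ≤ u i ∧ u i ≤ 1) (hV : V ⊆ supp H j) (hW : W ⊆ supp H j)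
    (hVodd : Odd #V) (hWodd : Odd #W) (hne : V ≠ W) :
    2 ≤ LHS H j V u + LHS H j W u := by
  classical
  rw [LHS_eq_sum_ite H hV, LHS_eq_sum_ite H hW, ← sum_add_distrib]
  set g : Fin n → ℝ := fun i =>
    (if i ∈ V then 1 - u i else u i) + (if i ∈ W then 1 - u i else u i)
  have hg0 : ∀ i, 0 ≤ g i := fun i => by
    have := hu i
    simp only [g]
    split_ifs <;> linarith
  have hg1 : ∀ i ∈ V ∆ W, g i = 1 := fun i hi => by
    simp only [g]
    rcases mem_symmDiff.mp hi with ⟨hiV, hiW⟩ | ⟨hiW, hiV⟩ <;> simp [hiV, hiW]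
  have hsub : V ∆ W ⊆ supp H j := by
    intro i hi
    rcases mem_symmDiff.mp hi with ⟨hiV, -⟩ | ⟨hiW, -⟩
    exacts [hV hiV, hW hiW]
  calc (2 : ℝ) ≤ #(V ∆ W) := by exact_mod_cast two_le_card_symmDiff_of_odd hVodd hWodd hne
    _ = ∑ i ∈ V ∆ W, g i := by rw [sum_congr rfl hg1, sum_const, nsmul_one]
    _ ≤ ∑ i ∈ supp H j, g i := sum_le_sum_of_subset_of_nonneg hsub fun i _ _ => hg0 i

lemma one_le_LHS_clamp {j : Fin m} {V : Finset (Fin n)} (hV : V ⊆ supp H j) {u : Fin n → ℝ}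
    (hu : 1 ≤ LHS H j V u) : 1 ≤ LHS H j V (fun i => max 0 (min 1 (u i))) := by
  rw [LHS_eq_sum_ite H hV] at hu ⊢
  calc 1 ≤ min 1 (∑ i ∈ supp H j, if i ∈ V then 1 - u i else u i) := le_min le_rfl hu
    _ ≤ ∑ i ∈ supp H j, max 0 (min 1 (if i ∈ V then 1 - u i else u i)) :=
      min_one_sum_le_sum_clamp _ _
    _ = _ := sum_congr rfl fun i _ => by split_ifs <;> simp [one_sub_clamp]

lemma mem_fundamentalPolytopeRows_of_active {C : Finset (Fin m × Finset (Fin n))}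
    (hC : ∀ p ∈ C, p.2 ⊆ supp H p.1 ∧ Odd #p.2) {u : Fin n → ℝ}
    (hu : ∀ i, 0 ≤ u i ∧ u i ≤ 1) :
    u ∈ fundamentalPolytopeRows H {j | ∃ V, (j, V) ∈ C ∧ LHS H j V u = 1} := by
  refine ⟨hu, ?_⟩
  rintro j ⟨V₀, hV₀, hact⟩ V hV hVodd
  obtain ⟨hV₀sub, hV₀odd⟩ := hC _ hV₀
  rcases eq_or_ne V V₀ with rfl | hne
  · exact hact.ge
  · linarith [two_le_LHS_add_LHS hu hV hV₀sub hVodd hV₀odd hne]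

end ParityInequalities

section Subproblem

variable {m n : ℕ} {H : Fin m → Fin n → Bool} {γ : Fin n → ℝ}
  {C : Finset (Fin m × Finset (Fin n))} {u : Fin n → ℝ}

lemma mem_feasible_of_mem_unitCube (hu : ∀ i, 0 ≤ u i ∧ u i ≤ 1)
    (hC : ∀ p ∈ C, 1 ≤ LHS H p.1 p.2 u) : u ∈ feasible H γ C :=
  ⟨fun i => ⟨fun _ => (hu i).1, fun _ => (hu i).2⟩, hC⟩

lemma mem_unitCube_of_unique_min (hC : ∀ p ∈ C, p.2 ⊆ supp H p.1) (hu : u ∈ feasible H γ C)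
    (huniq : ∀ v ∈ feasible H γ C, v ≠ u → ∑ i, γ i * u i < ∑ i, γ i * v i) :
    ∀ i, 0 ≤ u i ∧ u i ≤ 1 := by
  set w : Fin n → ℝ := fun i => max 0 (min 1 (u i))
  have hw : ∀ i, 0 ≤ w i ∧ w i ≤ 1 := fun i =>
    ⟨le_max_left _ _, max_le zero_le_one (min_le_left _ _)⟩
  have hwfeas : w ∈ feasible H γ C :=
    mem_feasible_of_mem_unitCube hw fun p hp => one_le_LHS_clamp (hC p hp) (hu.2 p hp)
  have hobj : ∑ i, γ i * w i ≤ ∑ i, γ i * u i :=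
    sum_le_sum fun i _ => mul_clamp_le (hu.1 i).1 (hu.1 i).2
  have hwu : w = u := by
    by_contra hne
    exact (huniq w hwfeas hne).not_ge hobj
  exact hwu ▸ hw

lemma sum_mul_lt_of_unique_min (hu : u ∈ feasible H γ C) (hu01 : ∀ i, 0 ≤ u i ∧ u i ≤ 1)
    (huniq : ∀ v ∈ feasible H γ C, v ≠ u → ∑ i, γ i * u i < ∑ i, γ i * v i)
    {v : Fin n → ℝ} (hv01 : ∀ i, 0 ≤ v i ∧ v i ≤ 1)
    (hact : ∀ p ∈ C, LHS H p.1 p.2 u = 1 → 1 ≤ LHS H p.1 p.2 v) (hne : v ≠ u) :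
    ∑ i, γ i * u i < ∑ i, γ i * v i := by
  set z : ℝ → Fin n → ℝ := fun ε i => (1 - ε) * u i + ε * v i
  obtain ⟨ε, ⟨hε0, hε1⟩, hzC⟩ : ∃ ε, ε ∈ Set.Ioo 0 1 ∧ ∀ p ∈ C, 1 ≤ LHS H p.1 p.2 (z ε) := by
    refine ((eventually_mem_set.2 (Ioo_mem_nhdsGT zero_lt_one)).and
      ((eventually_all_finset C).2 fun p hp => ?_)).exists
    simpa only [z, LHS_convexComb p.1 p.2 u v (sub_add_cancel 1 _)] using
      eventually_one_le_convexComb (hu.2 p hp) (hact p hp)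
  have hz01 : ∀ i, 0 ≤ z ε i ∧ z ε i ≤ 1 := fun i => by
    have := hu01 i
    have := hv01 i
    constructor <;> nlinarith
  have hzne : z ε ≠ u := fun hzu => hne <| funext fun i => by
    have := congrFun hzu i
    simp only [z] at this
    nlinarith
  have hobj : ∑ i, γ i * z ε i = (1 - ε) * ∑ i, γ i * u i + ε * ∑ i, γ i * v i := by
    rw [mul_sum, mul_sum, ← sum_add_distrib]
    exact sum_congr rfl fun i _ => by ring
  have hlt := huniq (z ε) (mem_feasible_of_mem_unitCube hz01 hzC) hzne
  rw [hobj] at hlt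
  nlinarith

end Subproblem

theorem stmt_11_general (m n : ℕ) (H : Fin m → Fin n → Bool) (γ : Fin n → ℝ)
    (C : Finset (Fin m × Finset (Fin n)))
    (hC : ∀ p ∈ C, p.2 ⊆ supp H p.1 ∧ Odd p.2.card)
    (ustar : Fin n → ℝ) (hfeas : ustar ∈ feasible H γ C)
    (huniq : ∀ v ∈ feasible H γ C, v ≠ ustar →
      ∑ i, γ i * ustar i < ∑ i, γ i * v i)
    (J : Set (Fin m))
    (hJ : J = {j | ∃ V, (j, V) ∈ C ∧ LHS H j V ustar = 1}) :
    ustar ∈ fundamentalPolytopeRows H J ∧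
      ∀ v ∈ fundamentalPolytopeRows H J, v ≠ ustar →
        ∑ i, γ i * ustar i < ∑ i, γ i * v i := by
  have hbox := mem_unitCube_of_unique_min (fun p hp => (hC p hp).1) hfeas huniq
  subst hJ
  refine ⟨mem_fundamentalPolytopeRows_of_active hC hbox, fun v hv hne => ?_⟩
  exact sum_mul_lt_of_unique_min hfeas hbox huniq hv.1
    (fun p hp hact => hv.2 p.1 ⟨p.2, hp, hact⟩ p.2 (hC p hp).1 (hC p hp).2) hne

/-- the unique minimizer `u*` of an (M)ALP subproblem is also
the unique minimizer of `γᵀu` over the fundamental polytope of the submatrix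
`H_J` of `H` consisting of the rows that have a parity inequality in the
subproblem that is active at `u*`. -/
theorem stmt_11 (m n : ℕ) (H : Fin m → Fin n → Bool) (γ : Fin n → ℝ)
    (hγ : ∀ i, γ i ≠ 0)
    (C : Finset (Fin m × Finset (Fin n)))
    (hC : ∀ p ∈ C, p.2 ⊆ supp H p.1 ∧ Odd p.2.card)
    (ustar : Fin n → ℝ) (hfeas : ustar ∈ feasible H γ C)
    (huniq : ∀ v ∈ feasible H γ C, v ≠ ustar →
      ∑ i, γ i * ustar i < ∑ i, γ i * v i)
    (J : Set (Fin m))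
    (hJ : J = {j | ∃ V, (j, V) ∈ C ∧ LHS H j V ustar = 1}) :
    ustar ∈ fundamentalPolytopeRows H J ∧
      ∀ v ∈ fundamentalPolytopeRows H J, v ≠ ustar →
        ∑ i, γ i * ustar i < ∑ i, γ i * v i :=
  stmt_11_general m n H γ C hC ustar hfeas huniq J hJ
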